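/- For any outerplanar graph G on n ≥ 3 vertices, the secure total domination number satisfies γ_st(G) ≥ ⌈(n+2)/3⌉. -/

import Mathlib

/-!
If `S` is a secure total dominating set, every `u ∉ S` has two neighbours in `S`: its defender `v`
and a vertex of `S \ {v}` that dominates `u` after the swap. Choosing two such neighbours for each
`u ∉ S` makes the vertices outside `S` the edges of a loopless multigraph on `S`. If every vertex of
this multigraph had degree at least three, the end `x` of a longest path would have three edges
whose other ends lie on the path, and `x` together with the middle one of these ends would be the
branch vertices of a subdivided `K₂,₃` in `G`. So some vertex has degree at most two; deleting it
and inducting gives `n - |S| ≤ 2 |S| - 2`, i.e. `|S| ≥ (n + 2) / 3`.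
-/

open SimpleGraph

variable {V : Type*}

/-- `S` is a total dominating set of `G`: every vertex has a neighbor in `S`. -/
def TotalDom (G : SimpleGraph V) (S : Set V) : Prop :=
  ∀ v : V, ∃ u ∈ S, G.Adj v u

/-- `v ∈ S` totally `S`-defends `u ∉ S`. -/
def Defends (G : SimpleGraph V) (S : Set V) (v u : V) : Prop :=
  G.Adj u v ∧ TotalDom G ((S \ {v}) ∪ {u})

/-- `S` is a secure total dominating set of `G`. -/
def STDS (G : SimpleGraph V) (S : Set V) : Prop :=
  TotalDom G S ∧ ∀ u ∉ S, ∃ v ∈ S, Defends G S v u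

/-- `S` is a 2-dominating set of `G`. -/
def TwoDom (G : SimpleGraph V) (S : Set V) : Prop :=
  ∀ v ∉ S, 2 ≤ (S ∩ G.neighborSet v).ncard

/-- external private neighborhood of `v` with respect to `S`. -/
def epn (G : SimpleGraph V) (v : V) (S : Set V) : Set V :=
  {w | w ∉ S ∧ G.neighborSet w ∩ S = {v}}

/-- internal private neighborhood of `v` with respect to `S`. -/
def ipn (G : SimpleGraph V) (v : V) (S : Set V) : Set V :=
  {u | u ∈ S ∧ G.neighborSet u ∩ S = {v}}

/-- secure total domination number. -/
noncomputable def gammaSt (G : SimpleGraph V) : ℕ :=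
  sInf {n | ∃ S : Set V, STDS G S ∧ S.ncard = n}

/-- `G` contains a subgraph that is a subdivision of `K`:  there is an injective map of
branch vertices together with pairwise internally disjoint paths joining them. -/
def ContainsSubdivision {W : Type*} (K : SimpleGraph W) (G : SimpleGraph V) : Prop :=
  ∃ (f : W → V) (p : ∀ a b, K.Adj a b → G.Walk (f a) (f b)),
    Function.Injective f ∧
    (∀ a b (h : K.Adj a b), (p a b h).IsPath) ∧
    (∀ a b (h : K.Adj a b), ∀ w ∈ (p a b h).support, w ∈ Set.range f → w = f a ∨ w = f b) ∧
    (∀ a b c d (h₁ : K.Adj a b) (h₂ : K.Adj c d), s(a, b) ≠ s(c, d) →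
      ∀ w, w ∈ (p a b h₁).support → w ∈ (p c d h₂).support → w ∈ Set.range f)

/-- outerplanar graphs: no subdivision of `K₄` nor of `K₂,₃` as a subgraph. -/
def Outerplanar (G : SimpleGraph V) : Prop :=
  ¬ ContainsSubdivision (completeGraph (Fin 4)) G ∧
  ¬ ContainsSubdivision (completeBipartiteGraph (Fin 2) (Fin 3)) G

/-- maximal outerplanar graphs: adding any edge destroys outerplanarity. -/
def MaximalOuterplanar (G : SimpleGraph V) : Prop :=
  Outerplanar G ∧
  ∀ u v : V, u ≠ v → ¬ G.Adj u v →
    ¬ Outerplanar (G ⊔ SimpleGraph.fromEdgeSet {s(u, v)})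

namespace SimpleGraph.Walk

variable {G : SimpleGraph V}

lemma exists_getVert_eq_of_mem_support_take_drop {u v w : V} {p : G.Walk u v} {i n : ℕ}
    (hw : w ∈ ((p.drop i).take n).support) : ∃ m, i ≤ m ∧ m ≤ i + n ∧ p.getVert m = w := by
  obtain ⟨k, rfl, -⟩ := mem_support_iff_exists_getVert.mp hw
  exact ⟨i + min n k, by omega, by omega, by rw [take_getVert, drop_getVert]⟩

def segment {u v : V} (p : G.Walk u v) (i j : ℕ) : G.Walk (p.getVert i) (p.getVert j) :=
  if h : i ≤ j then
    ((p.drop i).take (j - i)).copy rfl (by rw [drop_getVert, Nat.add_sub_cancel' h])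
  else
    ((p.drop j).take (i - j)).reverse.copy
      (by rw [drop_getVert, Nat.add_sub_cancel' (by omega)]) rfl

lemma exists_getVert_eq_of_mem_support_segment {u v w : V} {p : G.Walk u v} {i j : ℕ}
    (hw : w ∈ (p.segment i j).support) : ∃ m, min i j ≤ m ∧ m ≤ max i j ∧ p.getVert m = w := by
  unfold segment at hw
  split_ifs at hw
  · obtain ⟨m, h₁, h₂, rfl⟩ := exists_getVert_eq_of_mem_support_take_drop (by simpa using hw)
    exact ⟨m, by omega, by omega, rfl⟩
  · obtain ⟨m, h₁, h₂, rfl⟩ := exists_getVert_eq_of_mem_support_take_drop (by simpa using hw)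
    exact ⟨m, by omega, by omega, rfl⟩

lemma IsPath.segment {u v : V} {p : G.Walk u v} (hp : p.IsPath) (i j : ℕ) :
    (p.segment i j).IsPath := by
  unfold Walk.segment
  split_ifs
  · simpa using (hp.drop i).take (j - i)
  · simpa using ((hp.drop j).take (i - j)).reverse

lemma IsPath.eq_getVert_of_mem_support_segment {u v w : V} {p : G.Walk u v}
    (hp : p.IsPath) {q : Fin 3 → ℕ} (hq : Monotone q) (hlen : ∀ j, q j ≤ p.length)
    {j j' : Fin 3} (hjj' : j ≠ j') (hj : w ∈ (p.segment (q 1) (q j)).support)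
    (hj' : w ∈ (p.segment (q 1) (q j')).support) : w = p.getVert (q 1) := by
  obtain ⟨m, hm₁, hm₂, rfl⟩ := exists_getVert_eq_of_mem_support_segment hj
  obtain ⟨m', hm₁', hm₂', hmm'⟩ := exists_getVert_eq_of_mem_support_segment hj'
  have h₁ := hlen 1
  have hm : m' = m := hp.getVert_injOn (by simp; have := hlen j'; omega)
    (by simp; have := hlen j; omega) hmm'
  have h01 := hq (show (0 : Fin 3) ≤ 1 by decide)
  have h12 := hq (show (1 : Fin 3) ≤ 2 by decide)
  congr 1
  fin_cases j <;> fin_cases j' <;> simp at hjj' hm₁ hm₂ hm₁' hm₂' ⊢ <;> omega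

lemma adj_getVert_pred {u v : V} (p : G.Walk u v) {i : ℕ} (hi₀ : 0 < i) (hi : i ≤ p.length) :
    G.Adj (p.getVert (i - 1)) (p.getVert i) := by
  simpa [Nat.sub_add_cancel hi₀] using p.adj_getVert_succ (i := i - 1) (by omega)

variable {s x w y : V} {P : G.Walk s x}

/-- The two neighbours of `w` on `P` would both have to be `y`. -/
lemma IsPath.ne_getVert_of_forall_adj (hP : P.IsPath) (hws : w ≠ s)
    (hw : ∀ v, G.Adj w v → v = x ∨ v = y) {m : ℕ} (hm : m + 1 < P.length) : w ≠ P.getVert m := by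
  rintro rfl
  have hm₀ : m ≠ 0 := by rintro rfl; exact hws P.getVert_zero
  have hx : ∀ k, k < P.length → P.getVert k ≠ x := fun k hk =>
    (hP.getVert_eq_end_iff hk.le).not.mpr hk.ne
  have hnext : P.getVert (m + 1) = y :=
    (hw _ (P.adj_getVert_succ (by omega))).resolve_left (hx _ (by omega))
  have hprev : P.getVert (m - 1) = y :=
    (hw _ (P.adj_getVert_pred (by omega) (by omega)).symm).resolve_left (hx _ (by omega))
  have := hP.getVert_injOn (by simp; omega) (by simp; omega) (hnext.trans hprev.symm)
  omega

def IsLongestPathIn (P : G.Walk s x) (A : Set V) : Prop :=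
  s ∈ A ∧ x ∈ A ∧ P.IsPath ∧
    ∀ s' x' (Q : G.Walk s' x'), s' ∈ A → x' ∈ A → Q.IsPath → Q.length ≤ P.length

lemma exists_isLongestPathIn [Finite V] (G : SimpleGraph V) {A : Set V} (hA : A.Nonempty) :
    ∃ s x, ∃ P : G.Walk s x, P.IsLongestPathIn A := by
  have := Fintype.ofFinite V
  set L := {n | ∃ s x, ∃ P : G.Walk s x, s ∈ A ∧ x ∈ A ∧ P.IsPath ∧ P.length = n}
  have hL : BddAbove L := ⟨Fintype.card V, by
    rintro n ⟨s, x, P, -, -, hP, rfl⟩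
    exact hP.length_lt.le⟩
  obtain ⟨s₀, hs₀⟩ := hA
  obtain ⟨s, x, P, hs, hx, hP, hlen⟩ :=
    Nat.sSup_mem (s := L) ⟨0, s₀, s₀, nil, hs₀, hs₀, .nil, rfl⟩ hL
  exact ⟨s, x, P, hs, hx, hP, fun s' x' Q hs' hx' hQ =>
    hlen ▸ le_csSup hL ⟨s', x', Q, hs', hx', hQ, rfl⟩⟩

/-- Otherwise `P` could be prolonged by `x - w - y`. -/
lemma IsLongestPathIn.exists_getVert_eq {A : Set V} (hP : P.IsLongestPathIn A)
    (hA : G.IsIndepSet A) (hwA : w ∉ A) (hyA : y ∈ A) (hxy : x ≠ y)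
    (hw : ∀ v, G.Adj w v ↔ v = x ∨ v = y) : ∃ q, q + 1 < P.length ∧ P.getVert q = y := by
  obtain ⟨hs, hxA, hpath, hmax⟩ := hP
  have hxw : G.Adj x w := ((hw x).mpr (Or.inl rfl)).symm
  have hy : y ∈ P.support := by
    by_contra hy
    have hwP : w ∉ P.support := by
      intro hwP
      obtain ⟨m, rfl, hm⟩ := mem_support_iff_exists_getVert.mp hwP
      have hm₁ : ¬ m + 1 < P.length := fun h => hpath.ne_getVert_of_forall_adj
        (ne_of_mem_of_not_mem hs hwA).symm (fun v => (hw v).mp) h rfl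
      have hm₂ : m ≠ P.length := by rintro rfl; exact hwA (by rwa [getVert_length])
      have hm₃ : m ≠ 0 := by rintro rfl; exact hwA (by rwa [getVert_zero])
      rcases (hw _).mp (P.adj_getVert_pred (by omega) hm).symm with h | h
      · exact absurd h ((hpath.getVert_eq_end_iff (by omega)).not.mpr (by omega))
      · exact hy (h ▸ P.getVert_mem_support _)
    have hQ : ((P.concat hxw).concat ((hw y).mpr (Or.inr rfl))).IsPath := by
      refine (hpath.concat hwP hxw).concat ?_ _
      rw [support_concat, List.mem_append, List.mem_singleton, not_or]
      exact ⟨hy, by rintro rfl; exact hwA hyA⟩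
    have := hmax s y _ hs hyA hQ
    simp only [length_concat] at this
    omega
  obtain ⟨q, rfl, hq⟩ := mem_support_iff_exists_getVert.mp hy
  refine ⟨q, ?_, rfl⟩
  have hq₁ : q ≠ P.length := by rintro rfl; exact hxy (P.getVert_length).symm
  have hq₂ : q + 1 ≠ P.length := fun h =>
    hA hyA hxA hxy.symm (by simpa [h] using P.adj_getVert_succ (i := q) (by omega))
  omega

end SimpleGraph.Walk

section Subdivision

variable {G H : SimpleGraph V}

lemma ContainsSubdivision.mono {W : Type*} {K : SimpleGraph W} (hGH : G ≤ H)
    (hK : ContainsSubdivision K G) : ContainsSubdivision K H := by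
  obtain ⟨f, p, hf, hpath, hends, hdisj⟩ := hK
  refine ⟨f, fun a b h => (p a b h).mapLe hGH, hf, fun a b h => (hpath a b h).mapLe hGH, ?_, ?_⟩
  · simpa only [Walk.support_mapLe_eq_support] using hends
  · simpa only [Walk.support_mapLe_eq_support] using hdisj

variable {α β : Type*} {fl : α → V} {fr : β → V}

def bipartiteBranchWalk (h : ∀ i j, G.Walk (fl i) (fr j)) :
    ∀ x y, (completeBipartiteGraph α β).Adj x y → G.Walk (Sum.elim fl fr x) (Sum.elim fl fr y)
  | .inl i, .inr j, _ => h i j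
  | .inr j, .inl i, _ => (h i j).reverse
  | .inl _, .inl _, hxy => absurd hxy (by simp)
  | .inr _, .inr _, hxy => absurd hxy (by simp)

lemma exists_bipartiteBranchWalk_eq (h : ∀ i j, G.Walk (fl i) (fr j)) :
    ∀ x y (hxy : (completeBipartiteGraph α β).Adj x y), ∃ i j, s(x, y) = s(.inl i, .inr j) ∧
      (∀ w, w ∈ (bipartiteBranchWalk h x y hxy).support ↔ w ∈ (h i j).support) ∧
      ((bipartiteBranchWalk h x y hxy).IsPath ↔ (h i j).IsPath)
  | .inl i, .inr j, _ => ⟨i, j, rfl, fun _ => Iff.rfl, Iff.rfl⟩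
  | .inr j, .inl i, _ => ⟨i, j, Sym2.eq_swap, by simp [bipartiteBranchWalk], by
      simp [bipartiteBranchWalk]⟩
  | .inl _, .inl _, hxy => absurd hxy (by simp)
  | .inr _, .inr _, hxy => absurd hxy (by simp)

theorem containsSubdivision_completeBipartiteGraph (h : ∀ i j, G.Walk (fl i) (fr j))
    (hinj : Function.Injective (Sum.elim fl fr)) (hpath : ∀ i j, (h i j).IsPath)
    (hends : ∀ i j, ∀ w ∈ (h i j).support, w ∈ Set.range (Sum.elim fl fr) → w = fl i ∨ w = fr j)
    (hdisj : ∀ i j i' j', (i, j) ≠ (i', j') → ∀ w ∈ (h i j).support, w ∈ (h i' j').support →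
      w ∈ Set.range (Sum.elim fl fr)) :
    ContainsSubdivision (completeBipartiteGraph α β) G := by
  refine ⟨Sum.elim fl fr, bipartiteBranchWalk h, hinj, fun x y hxy => ?_, fun x y hxy w hw => ?_,
    fun x y x' y' hxy hxy' hne w hw hw' => ?_⟩
  · obtain ⟨i, j, -, -, hp⟩ := exists_bipartiteBranchWalk_eq h x y hxy
    exact hp.mpr (hpath i j)
  · obtain ⟨i, j, hij, hs, -⟩ := exists_bipartiteBranchWalk_eq h x y hxy
    rcases Sym2.eq_iff.mp hij with ⟨rfl, rfl⟩ | ⟨rfl, rfl⟩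
    · exact hends i j w ((hs w).mp hw)
    · exact fun hr => (hends i j w ((hs w).mp hw) hr).symm
  · obtain ⟨i, j, hij, hs, -⟩ := exists_bipartiteBranchWalk_eq h x y hxy
    obtain ⟨i', j', hij', hs', -⟩ := exists_bipartiteBranchWalk_eq h x' y' hxy'
    refine hdisj i j i' j' ?_ w ((hs w).mp hw) ((hs' w).mp hw')
    rintro ⟨⟩
    exact hne (hij.trans hij'.symm)

theorem containsSubdivision_completeBipartiteGraph_fin_two_of_paths {x y : V} {w : β → V}
    (hw : Function.Injective w) (hxy : x ≠ y) (hxw : ∀ j, G.Adj x (w j))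
    (p : ∀ j, G.Walk y (w j)) (hp : ∀ j, (p j).IsPath) (hx : ∀ j, x ∉ (p j).support)
    (hwp : ∀ i j, w i ∈ (p j).support → i = j) (hwy : ∀ j, w j ≠ y)
    (hdisj : ∀ j j', j ≠ j' → ∀ v ∈ (p j).support, v ∈ (p j').support → v = y) :
    ContainsSubdivision (completeBipartiteGraph (Fin 2) β) G := by
  let h : ∀ i j, G.Walk (![x, y] i) (w j) := fun i j => match i with
    | 0 => (hxw j).toWalk
    | 1 => p j
  have hrange : ∀ v, v ∈ Set.range (Sum.elim ![x, y] w) ↔ v = x ∨ v = y ∨ ∃ j, v = w j := by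
    intro v
    simp [Set.Sum.elim_range]
    tauto
  have hmem₀ : ∀ j, ∀ v ∈ (h 0 j).support, v = x ∨ v = w j := fun j v hv => by
    change v ∈ (hxw j).toWalk.support at hv
    simpa only [Adj.support_toWalk, List.mem_pair] using hv
  refine containsSubdivision_completeBipartiteGraph h ?_ (fun i j => ?_) (fun i j v hv hvr => ?_)
    (fun i j i' j' hne v hv hv' => (hrange v).mpr ?_)
  · refine Function.Injective.sumElim (fun i i' hii' => ?_) hw fun i j => ?_ <;> fin_cases i
    · fin_cases i'
      exacts [rfl, absurd hii' hxy]
    · fin_cases i'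
      exacts [absurd hii'.symm hxy, rfl]
    · exact (hxw j).ne
    · exact (hwy j).symm
  · fin_cases i
    exacts [Walk.IsPath.of_adj (hxw j), hp j]
  · fin_cases i
    · exact hmem₀ j v hv
    · rcases (hrange _).mp hvr with rfl | rfl | ⟨k, rfl⟩
      · exact absurd hv (hx j)
      · exact Or.inl rfl
      · exact Or.inr (congrArg w (hwp k j hv))
  fin_cases i <;> fin_cases i'
  · exact (hmem₀ j v hv).imp_right fun h => Or.inr ⟨j, h⟩
  · exact (hmem₀ j v hv).imp_right fun h => Or.inr ⟨j, h⟩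
  · exact (hmem₀ j' v hv').imp_right fun h => Or.inr ⟨j', h⟩
  · exact Or.inr (Or.inl (hdisj j j' (fun hjj' => hne (by rw [hjj'])) v hv hv'))

/-- The branch vertices are the end `x` of `P` and the middle one of the three vertices where the
ears `x - w i - P.getVert (q i)` land on `P`; the two outer ears are continued along `P`. -/
theorem containsSubdivision_K23_of_monotone_ears {s x : V} {P : G.Walk s x} (hP : P.IsPath)
    {w : Fin 3 → V} {q : Fin 3 → ℕ} (hw : Function.Injective w) (hq : Monotone q)
    (hlen : ∀ i, q i + 1 < P.length) (hxw : ∀ i, G.Adj x (w i))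
    (hwq : ∀ i, G.Adj (P.getVert (q i)) (w i))
    (hoff : ∀ i m, m + 1 < P.length → w i ≠ P.getVert m) :
    ContainsSubdivision (completeBipartiteGraph (Fin 2) (Fin 3)) G := by
  have hseg : ∀ j v, v ∈ (P.segment (q 1) (q j)).support →
      ∃ m, m + 1 < P.length ∧ P.getVert m = v := fun j v hv => by
    obtain ⟨m, -, hm, rfl⟩ := Walk.exists_getVert_eq_of_mem_support_segment hv
    exact ⟨m, by have := hlen 1; have := hlen j; omega, rfl⟩
  have hx : ∀ j, x ∉ (P.segment (q 1) (q j)).support := fun j hv => by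
    obtain ⟨m, hm, hmx⟩ := hseg j x hv
    exact (hP.getVert_eq_end_iff (by omega)).not.mpr (by omega) hmx
  have hw_seg : ∀ i j, w i ∉ (P.segment (q 1) (q j)).support := fun i j hv => by
    obtain ⟨m, hm, hmv⟩ := hseg j _ hv
    exact hoff i m hm hmv.symm
  have hmem : ∀ j v, v ∈ ((P.segment (q 1) (q j)).concat (hwq j)).support ↔
      v ∈ (P.segment (q 1) (q j)).support ∨ v = w j := fun j v => by
    rw [Walk.support_concat, List.mem_append, List.mem_singleton]
  have hwp : ∀ i j, w i ∈ ((P.segment (q 1) (q j)).concat (hwq j)).support → i = j :=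
    fun i j hv => hw (((hmem j _).mp hv).resolve_left (hw_seg i j))
  have hxy : x ≠ P.getVert (q 1) := fun h => by
    have := hlen 1
    exact absurd ((hP.getVert_eq_end_iff (by omega)).mp h.symm) (by omega)
  refine containsSubdivision_completeBipartiteGraph_fin_two_of_paths hw hxy hxw _
    (fun j => (hP.segment _ _).concat (hw_seg j j) _)
    (fun j hv => ((hmem j x).mp hv).elim (hx j) (hxw j).ne) hwp (fun j => hoff j _ (hlen 1))
    fun j j' hjj' v hv hv' => ?_
  rcases (hmem j v).mp hv with hv | rfl
  · rcases (hmem j' v).mp hv' with hv' | rfl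
    · exact hP.eq_getVert_of_mem_support_segment hq (fun j => by have := hlen j; omega) hjj' hv hv'
    · exact absurd hv (hw_seg j' j)
  · exact absurd (hwp j j' hv') hjj'

theorem containsSubdivision_K23_of_ears {s x : V} {P : G.Walk s x} (hP : P.IsPath)
    {w : Fin 3 → V} {q : Fin 3 → ℕ} (hw : Function.Injective w)
    (hlen : ∀ i, q i + 1 < P.length) (hxw : ∀ i, G.Adj x (w i))
    (hwq : ∀ i, G.Adj (P.getVert (q i)) (w i))
    (hoff : ∀ i m, m + 1 < P.length → w i ≠ P.getVert m) :
    ContainsSubdivision (completeBipartiteGraph (Fin 2) (Fin 3)) G :=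
  containsSubdivision_K23_of_monotone_ears hP (hw.comp (Tuple.sort q).injective)
    (Tuple.monotone_sort q) (fun _ => hlen _) (fun _ => hxw _) (fun _ => hwq _) (fun _ => hoff _)

end Subdivision

section Multigraph

open Finset

variable {G : SimpleGraph V} {S T : Finset V} {a b : V → V}

/-- The multigraph on `S` with an edge `a u - b u` for each `u ∈ T`, each edge subdivided by its
label `u`. -/
def subdivisionGraph (T : Finset V) (a b : V → V) : SimpleGraph V :=
  fromRel fun u v => u ∈ T ∧ (v = a u ∨ v = b u)

lemma subdivisionGraph_le (hG : ∀ u ∈ T, G.Adj u (a u) ∧ G.Adj u (b u)) :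
    subdivisionGraph T a b ≤ G := by
  rintro u v ⟨-, ⟨hu, rfl | rfl⟩ | ⟨hv, rfl | rfl⟩⟩
  exacts [(hG u hu).1, (hG u hu).2, (hG v hv).1.symm, (hG v hv).2.symm]

lemma isIndepSet_subdivisionGraph (hST : Disjoint S T) :
    (subdivisionGraph T a b).IsIndepSet S := by
  rintro u hu v hv - ⟨-, ⟨hu', -⟩ | ⟨hv', -⟩⟩
  exacts [disjoint_left.mp hST hu hu', disjoint_left.mp hST hv hv']

lemma subdivisionGraph_adj_iff (hST : Disjoint S T) (hab : ∀ u ∈ T, a u ∈ S ∧ b u ∈ S)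
    {u : V} (hu : u ∈ T) (v : V) : (subdivisionGraph T a b).Adj u v ↔ v = a u ∨ v = b u := by
  have huS : u ∉ S := disjoint_right.mp hST hu
  refine ⟨?_, fun hv => ⟨?_, Or.inl ⟨hu, hv⟩⟩⟩
  · rintro ⟨-, ⟨-, hv⟩ | ⟨hv, rfl | rfl⟩⟩
    exacts [hv, absurd (hab v hv).1 huS, absurd (hab v hv).2 huS]
  · rintro rfl
    rcases hv with hv | hv
    exacts [huS (hv ▸ (hab u hu).1), huS (hv ▸ (hab u hu).2)]

theorem containsSubdivision_K23_of_three_le_card [Finite V] [DecidableEq V] (hST : Disjoint S T)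
    (hab : ∀ u ∈ T, a u ∈ S ∧ b u ∈ S ∧ a u ≠ b u ∧ G.Adj u (a u) ∧ G.Adj u (b u))
    (hS : S.Nonempty) (h3 : ∀ x ∈ S, 3 ≤ #{u ∈ T | a u = x ∨ b u = x}) :
    ContainsSubdivision (completeBipartiteGraph (Fin 2) (Fin 3)) G := by
  set H := subdivisionGraph T a b
  obtain ⟨s, x, P, hP⟩ := Walk.exists_isLongestPathIn H (A := S) hS
  have ⟨hsS, hxS, hpath, _⟩ := hP
  let e : Fin 3 ↪ {u ∈ T | a u = x ∨ b u = x} :=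
    (Fin.castLEEmb (h3 x hxS)).trans (equivFin _).symm.toEmbedding
  have heT : ∀ i, (e i : V) ∈ T := fun i => (mem_filter.mp (e i).2).1
  have heS : ∀ i, (e i : V) ∉ S := fun i => disjoint_right.mp hST (heT i)
  have hother : ∀ i, ∃ y ∈ S, y ≠ x ∧ ∀ v, H.Adj (e i) v ↔ v = x ∨ v = y := by
    intro i
    obtain ⟨ha, hb, hne, -⟩ := hab _ (heT i)
    simp only [H, subdivisionGraph_adj_iff hST (fun u hu => ⟨(hab u hu).1, (hab u hu).2.1⟩)
      (heT i)]
    rcases (mem_filter.mp (e i).2).2 with hx | hx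
    · exact ⟨_, hb, fun h => hne (hx.trans h.symm), fun v => by rw [hx]⟩
    · exact ⟨_, ha, fun h => hne (h.trans hx.symm), fun v => by rw [hx, or_comm]⟩
  choose y hyS hyx hadj using hother
  choose q hq hqy using fun i =>
    hP.exists_getVert_eq (isIndepSet_subdivisionGraph hST) (heS i) (hyS i) (hyx i).symm (hadj i)
  refine (containsSubdivision_K23_of_ears hpath (w := fun i => e i)
    (Subtype.val_injective.comp e.injective) hq (fun i => ((hadj i x).mpr (Or.inl rfl)).symm)
    (fun i => ?_) fun i m hm => ?_).mono (subdivisionGraph_le fun u hu => (hab u hu).2.2.2)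
  · exact hqy i ▸ ((hadj i _).mpr (Or.inr rfl)).symm
  · exact hpath.ne_getVert_of_forall_adj (ne_of_mem_of_not_mem hsS (heS i)).symm
      (fun v => (hadj i v).mp) hm

theorem card_add_two_le_two_mul_card [Finite V] [DecidableEq V]
    (hG : ¬ ContainsSubdivision (completeBipartiteGraph (Fin 2) (Fin 3)) G) (hST : Disjoint S T)
    (hab : ∀ u ∈ T, a u ∈ S ∧ b u ∈ S ∧ a u ≠ b u ∧ G.Adj u (a u) ∧ G.Adj u (b u))
    (hS : S.Nonempty) : #T + 2 ≤ 2 * #S := by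
  induction S using Finset.strongInduction generalizing T with
  | H S ih =>
  obtain ⟨x, hxS, hx⟩ : ∃ x ∈ S, #{u ∈ T | a u = x ∨ b u = x} ≤ 2 := by
    by_contra! h
    exact hG (containsSubdivision_K23_of_three_le_card hST hab hS fun x hx => h x hx)
  rcases (S.erase x).eq_empty_or_nonempty with hS' | hS'
  · obtain rfl : S = {x} := (erase_eq_empty_iff S x).mp hS' |>.resolve_left hS.ne_empty
    obtain rfl : T = ∅ := eq_empty_of_forall_notMem fun u hu => by
      obtain ⟨ha, hb, hne, -⟩ := hab u hu
      exact hne ((mem_singleton.mp ha).trans (mem_singleton.mp hb).symm)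
    simp
  set D := {u ∈ T | a u = x ∨ b u = x}
  have hab' : ∀ u ∈ T \ D, a u ∈ S.erase x ∧ b u ∈ S.erase x ∧
      a u ≠ b u ∧ G.Adj u (a u) ∧ G.Adj u (b u) := by
    intro u hu
    simp only [D, mem_sdiff, mem_filter, not_and, not_or] at hu
    obtain ⟨ha, hb, hrest⟩ := hab u hu.1
    exact ⟨mem_erase.mpr ⟨(hu.2 hu.1).1, ha⟩, mem_erase.mpr ⟨(hu.2 hu.1).2, hb⟩, hrest⟩
  have := ih _ (erase_ssubset hxS) (hST.mono (erase_subset x S) sdiff_subset) hab' hS'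
  have := card_le_card_sdiff_add_card (s := T) (t := D)
  have := card_erase_of_mem hxS
  omega

end Multigraph

lemma STDS.exists_adj_ne {G : SimpleGraph V} {S : Set V} (hS : STDS G S) {u : V} (hu : u ∉ S) :
    ∃ v ∈ S, ∃ w ∈ S, v ≠ w ∧ G.Adj u v ∧ G.Adj u w := by
  obtain ⟨v, hvS, huv, hdom⟩ := hS.2 u hu
  obtain ⟨w, ⟨hwS, hwv⟩ | hwu, huw⟩ := hdom u
  · exact ⟨v, hvS, w, hwS, Ne.symm hwv, huv, huw⟩
  · exact absurd (hwu ▸ huw) (G.loopless.irrefl u)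

/-- `(n + 4) / 3 = ⌈(n + 2) / 3⌉` in truncating division. -/
theorem stds_lower_bound_outerplanar [Fintype V] (G : SimpleGraph V)
    (hG : Outerplanar G) (hn : 3 ≤ Fintype.card V)
    (S : Set V) (hS : STDS G S) :
    (Fintype.card V + 4) / 3 ≤ S.ncard := by
  classical
  choose! a ha b hb hab hua hub using fun u (hu : u ∉ S) => hS.exists_adj_ne hu
  obtain ⟨v⟩ := Fintype.card_pos_iff.mp (by omega : 0 < Fintype.card V)
  obtain ⟨s, hs, -⟩ := hS.1 v
  have := card_add_two_le_two_mul_card hG.2 (S := S.toFinset) disjoint_compl_right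
    (fun u hu => by
      simp only [Finset.mem_compl, Set.mem_toFinset] at hu ⊢
      exact ⟨ha u hu, hb u hu, hab u hu, hua u hu, hub u hu⟩)
    ⟨s, Set.mem_toFinset.mpr hs⟩
  rw [Set.ncard_eq_toFinset_card']
  have := S.toFinset.card_add_card_compl
  omega
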